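/- arXiv:2604.22392 — 4 statements merged into one kernel-verified Lean document; each statement's English description precedes it below -/
import Mathlib

section
/- Let (t*, W*_1, …, W*_K, W*_S) be an optimal solution of problem (P2-R). For each k define W̄*_k = (W*_k h_k h_kᴴ W*_k)/(h_kᴴ W*_k h_k) (well-defined since feasibility forces h_kᴴ W*_k h_k ≥ γ_k σ_k² > 0), and define W̄*_S = W*_S + Σ_{k=1}^K (W*_k − W̄*_k). Then (t*, W̄*_1, …, W̄*_K, W̄*_S) is also an optimal solution of problem (P2-R), and each W̄*_k has rank at most 1. -/
/-!
For a PSD matrix `W` and a vector `h`, the rank-one matrix `W̄ = W h hᴴ W / (hᴴ W h)` is PSD,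
has the same quadratic form as `W` at `h`, and `W - W̄` is PSD by Cauchy–Schwarz for the form
of `W`.
Replacing each `W_k` by `W̄_k` and moving the differences into `W_S` therefore keeps `R`
(hence the objective, the matrix `B(t, R)` and the power budget) unchanged and keeps `W_S` PSD,
while in each SINR constraint the signal term stays the same and no interference term grows.
-/

open Matrix ComplexOrder

/-- The 2×2 matrix `B(t, R)` from problem (P2-R). -/
noncomputable def Bmat {N : ℕ} (A1 A2 A3 : Matrix (Fin N) (Fin N) ℂ)
    (t : ℝ) (R : Matrix (Fin N) (Fin N) ℂ) : Matrix (Fin 2) (Fin 2) ℂ :=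
  !![(A1 * R).trace - (t : ℂ), (A2 * R).trace;
     (A2ᴴ * R).trace, (A3 * R).trace]

/-- Feasibility of a tuple `(t, W_1, …, W_K, W_S)` for problem (P2-R). -/
def Feasible {N K : ℕ} (A1 A2 A3 : Matrix (Fin N) (Fin N) ℂ)
    (h : Fin K → Fin N → ℂ) (γ σsq : Fin K → ℝ) (P : ℝ)
    (t : ℝ) (W : Fin K → Matrix (Fin N) (Fin N) ℂ)
    (WS : Matrix (Fin N) (Fin N) ℂ) : Prop :=
  (∀ k, (W k).PosSemidef) ∧ WS.PosSemidef ∧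
  (Bmat A1 A2 A3 t ((∑ k, W k) + WS)).PosSemidef ∧
  (∀ k, ((γ k * σsq k : ℝ) : ℂ) ≤
      star (h k) ⬝ᵥ ((W k - ((γ k : ℝ) : ℂ) • ∑ i ∈ Finset.univ.erase k, W i) *ᵥ h k)) ∧
  ((∑ k, W k) + WS).trace ≤ (P : ℂ)

/-- Optimality of a tuple for problem (P2-R). -/
def Optimal {N K : ℕ} (A1 A2 A3 : Matrix (Fin N) (Fin N) ℂ)
    (h : Fin K → Fin N → ℂ) (γ σsq : Fin K → ℝ) (P : ℝ)
    (t : ℝ) (W : Fin K → Matrix (Fin N) (Fin N) ℂ)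
    (WS : Matrix (Fin N) (Fin N) ℂ) : Prop :=
  Feasible A1 A2 A3 h γ σsq P t W WS ∧
  ∀ (t' : ℝ) (W' : Fin K → Matrix (Fin N) (Fin N) ℂ) (WS' : Matrix (Fin N) (Fin N) ℂ),
    Feasible A1 A2 A3 h γ σsq P t' W' WS' → t' ≤ t

namespace Matrix

variable {n : Type*} [Fintype n] {W : Matrix n n ℂ}

/-- `W x xᴴ W / (xᴴ W x)`; it is `0` when `xᴴ W x = 0`, because `0⁻¹ = 0`. -/
noncomputable def rankOneCompression (W : Matrix n n ℂ) (x : n → ℂ) : Matrix n n ℂ :=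
  (star x ⬝ᵥ (W *ᵥ x))⁻¹ • vecMulVec (W *ᵥ x) (star x ᵥ* W)

theorem rank_rankOneCompression_le (W : Matrix n n ℂ) (x : n → ℂ) :
    (W.rankOneCompression x).rank ≤ 1 := by
  rw [rankOneCompression, ← smul_vecMulVec]
  exact rank_vecMulVec_le _ _

theorem IsHermitian.rankOneCompression_eq (hW : W.IsHermitian) (x : n → ℂ) :
    W.rankOneCompression x =
      (star x ⬝ᵥ (W *ᵥ x))⁻¹ • vecMulVec (W *ᵥ x) (star (W *ᵥ x)) := by
  rw [rankOneCompression, star_mulVec, hW.eq]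

theorem IsHermitian.star_dotProduct_rankOneCompression_mulVec (hW : W.IsHermitian)
    (x y : n → ℂ) :
    star y ⬝ᵥ (W.rankOneCompression x *ᵥ y) =
      (star x ⬝ᵥ (W *ᵥ x))⁻¹ * ((star y ⬝ᵥ (W *ᵥ x)) * star (star y ⬝ᵥ (W *ᵥ x))) := by
  rw [hW.rankOneCompression_eq, smul_mulVec, vecMulVec_mulVec, dotProduct_smul,
    dotProduct_smul, star_dotProduct (W *ᵥ x) y]
  simp only [smul_eq_mul, MulOpposite.smul_eq_mul_unop, MulOpposite.unop_op]

theorem PosSemidef.rankOneCompression (hW : W.PosSemidef) (x : n → ℂ) :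
    (W.rankOneCompression x).PosSemidef := by
  rw [hW.isHermitian.rankOneCompression_eq]
  exact (posSemidef_vecMulVec_self_star _).smul (inv_nonneg.2 (hW.dotProduct_mulVec_nonneg x))

theorem PosSemidef.star_dotProduct_rankOneCompression_mulVec_self (hW : W.PosSemidef)
    (x : n → ℂ) :
    star x ⬝ᵥ (W.rankOneCompression x *ᵥ x) = star x ⬝ᵥ (W *ᵥ x) := by
  rw [hW.isHermitian.star_dotProduct_rankOneCompression_mulVec,
    (IsSelfAdjoint.of_nonneg (hW.dotProduct_mulVec_nonneg x)).star_eq]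
  rcases eq_or_ne (star x ⬝ᵥ (W *ᵥ x)) 0 with hc | hc
  · simp [hc]
  · exact inv_mul_cancel_left₀ hc _

theorem PosSemidef.sub_rankOneCompression (hW : W.PosSemidef) (x : n → ℂ) :
    (W - W.rankOneCompression x).PosSemidef := by
  set c := star x ⬝ᵥ (W *ᵥ x) with hc_def
  rcases eq_or_ne c 0 with hc | hc
  · rw [Matrix.rankOneCompression, ← hc_def, hc]
    simpa using hW
  have hc_star : star c = c := (IsSelfAdjoint.of_nonneg (hW.dotProduct_mulVec_nonneg x)).star_eq
  refine .of_dotProduct_mulVec_nonneg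
    (hW.isHermitian.sub (hW.rankOneCompression x).isHermitian) fun y => ?_
  rw [sub_mulVec, dotProduct_sub, hW.isHermitian.star_dotProduct_rankOneCompression_mulVec]
  set a := star y ⬝ᵥ (W *ᵥ x) with ha_def
  have ha_star : star x ⬝ᵥ (W *ᵥ y) = star a := by
    rw [star_dotProduct, star_mulVec, hW.isHermitian.eq, ← dotProduct_mulVec]
  -- Cauchy–Schwarz for the form of `W`: evaluate it at the residual `y - (aᴴ / c) x`.
  have key : star (y - (star a / c) • x) ⬝ᵥ (W *ᵥ (y - (star a / c) • x)) =
      star y ⬝ᵥ (W *ᵥ y) - c⁻¹ * (a * star a) := by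
    simp only [mulVec_sub, mulVec_smul, star_sub, star_smul, sub_dotProduct, dotProduct_sub,
      smul_dotProduct, dotProduct_smul, smul_eq_mul, ha_star, ← ha_def, ← hc_def, star_div₀, hc_star]
    field_simp
    ring
  exact key ▸ hW.dotProduct_mulVec_nonneg _

theorem dotProduct_sub_smul_sum_mulVec {α ι : Type*} [CommRing α] (u x : n → α)
    (A : Matrix n n α) (r : α) (s : Finset ι) (V : ι → Matrix n n α) :
    u ⬝ᵥ ((A - r • ∑ i ∈ s, V i) *ᵥ x) = u ⬝ᵥ (A *ᵥ x) - r * ∑ i ∈ s, u ⬝ᵥ (V i *ᵥ x) := by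
  rw [sub_mulVec, dotProduct_sub, smul_mulVec, dotProduct_smul, sum_mulVec, dotProduct_sum,
    smul_eq_mul]

end Matrix

theorem Feasible.of_quadForm_le {N K : ℕ} {A1 A2 A3 : Matrix (Fin N) (Fin N) ℂ}
    {h : Fin K → Fin N → ℂ} {γ σsq : Fin K → ℝ} {P t : ℝ}
    {W W' : Fin K → Matrix (Fin N) (Fin N) ℂ} {WS WS' : Matrix (Fin N) (Fin N) ℂ}
    (hf : Feasible A1 A2 A3 h γ σsq P t W WS) (hγ : ∀ k, 0 ≤ γ k)
    (hW' : ∀ k, (W' k).PosSemidef) (hWS' : WS'.PosSemidef)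
    (hsum : ∑ k, W' k + WS' = ∑ k, W k + WS)
    (hself : ∀ k, star (h k) ⬝ᵥ (W' k *ᵥ h k) = star (h k) ⬝ᵥ (W k *ᵥ h k))
    (hle : ∀ i k, star (h k) ⬝ᵥ (W' i *ᵥ h k) ≤ star (h k) ⬝ᵥ (W i *ᵥ h k)) :
    Feasible A1 A2 A3 h γ σsq P t W' WS' := by
  obtain ⟨-, -, hB, hsinr, htrace⟩ := hf
  refine ⟨hW', hWS', hsum ▸ hB, fun k => (hsinr k).trans ?_, hsum ▸ htrace⟩
  rw [dotProduct_sub_smul_sum_mulVec, dotProduct_sub_smul_sum_mulVec, hself]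
  gcongr
  · exact Complex.zero_le_real.2 (hγ k)
  · exact hle _ k

theorem stmt0_general {N K : ℕ} (A1 A2 A3 : Matrix (Fin N) (Fin N) ℂ)
    (h : Fin K → Fin N → ℂ) (γ σsq : Fin K → ℝ)
    (hγ : ∀ k, 0 < γ k) (P : ℝ)
    (t : ℝ) (W : Fin K → Matrix (Fin N) (Fin N) ℂ) (WS : Matrix (Fin N) (Fin N) ℂ)
    (hopt : Optimal A1 A2 A3 h γ σsq P t W WS)
    (Wbar : Fin K → Matrix (Fin N) (Fin N) ℂ)
    (hWbar : ∀ k, Wbar k =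
      (star (h k) ⬝ᵥ (W k *ᵥ h k))⁻¹ • vecMulVec (W k *ᵥ h k) (star (h k) ᵥ* W k))
    (WbarS : Matrix (Fin N) (Fin N) ℂ)
    (hWbarS : WbarS = WS + ∑ k, (W k - Wbar k)) :
    Optimal A1 A2 A3 h γ σsq P t Wbar WbarS ∧ ∀ k, (Wbar k).rank ≤ 1 := by
  obtain ⟨hfeas, hmax⟩ := hopt
  have hWbar' : ∀ k, Wbar k = (W k).rankOneCompression (h k) := hWbar
  have hW := hfeas.1
  have hdiff : ∀ k, (W k - Wbar k).PosSemidef := fun k =>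
    hWbar' k ▸ (hW k).sub_rankOneCompression (h k)
  refine ⟨⟨hfeas.of_quadForm_le (fun k => (hγ k).le)
      (fun k => hWbar' k ▸ (hW k).rankOneCompression (h k)) ?_ ?_ ?_ ?_, hmax⟩,
    fun k => hWbar' k ▸ rank_rankOneCompression_le (W k) (h k)⟩
  · exact hWbarS ▸ hfeas.2.1.add (posSemidef_sum _ fun k _ => hdiff k)
  · rw [hWbarS, Finset.sum_sub_distrib]
    abel
  · exact fun k => hWbar' k ▸ (hW k).star_dotProduct_rankOneCompression_mulVec_self (h k)
  · intro i k
    simpa [sub_mulVec] using (hdiff i).dotProduct_mulVec_nonneg (h k)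

/-- Proposition 1: given any optimal solution `(t*, {W*_k}, W*_S)` of (P2-R), the tuple
`(t*, {W̄*_k}, W̄*_S)` with `W̄*_k = W*_k h_k h_kᴴ W*_k / (h_kᴴ W*_k h_k)` and
`W̄*_S = W*_S + ∑_k (W*_k − W̄*_k)` is also optimal, and each `W̄*_k` has rank at most 1. -/
theorem stmt0 {N K : ℕ} (A1 A2 A3 : Matrix (Fin N) (Fin N) ℂ)
    (hA1 : A1.IsHermitian) (hA3 : A3.IsHermitian)
    (h : Fin K → Fin N → ℂ) (γ σsq : Fin K → ℝ)
    (hγ : ∀ k, 0 < γ k) (hσ : ∀ k, 0 < σsq k) (P : ℝ) (hP : 0 < P)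
    (t : ℝ) (W : Fin K → Matrix (Fin N) (Fin N) ℂ) (WS : Matrix (Fin N) (Fin N) ℂ)
    (hopt : Optimal A1 A2 A3 h γ σsq P t W WS)
    (Wbar : Fin K → Matrix (Fin N) (Fin N) ℂ)
    (hWbar : ∀ k, Wbar k =
      (star (h k) ⬝ᵥ (W k *ᵥ h k))⁻¹ • vecMulVec (W k *ᵥ h k) (star (h k) ᵥ* W k))
    (WbarS : Matrix (Fin N) (Fin N) ℂ)
    (hWbarS : WbarS = WS + ∑ k, (W k - Wbar k)) :
    Optimal A1 A2 A3 h γ σsq P t Wbar WbarS ∧ ∀ k, (Wbar k).rank ≤ 1 :=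
  stmt0_general A1 A2 A3 h γ σsq hγ P t W WS hopt Wbar hWbar WbarS hWbarS
end

section
/- Assume K ≥ 1. Let (t*, W*_1, …, W*_K, W*_S) be an optimal solution of problem (P2-R) with optimal value t* > 0. Then the power constraint is tight: tr(Σ_{k=1}^K W*_k + W*_S) = P. (Proof idea: feasibility forces tr(R*) > 0; if tr(R*) < P, scaling the whole solution by c = P/tr(R*) > 1 gives a feasible tuple with objective c·t* > t*, contradicting optimality.) -/
/-!
Multiplying a feasible tuple of (P2-R), and its objective `t`, by a real `c ≥ 1` multiplies
`B(t, R)`, the left sides of the SINR constraints and `tr R` by `c`, so only the power budget can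
break. The SINR constraints force `tr R > 0`, so if `tr R < P` the factor `c = P / tr R > 1`
gives a feasible tuple with objective `c t > t`.
-/

open Matrix ComplexOrder

theorem Matrix.PosSemidef.eq_zero_of_trace_sum_eq_zero {ι n 𝕜 : Type*} [Fintype n] [RCLike 𝕜]
    {s : Finset ι} {A : ι → Matrix n n 𝕜} (hA : ∀ i ∈ s, (A i).PosSemidef)
    (h : (∑ i ∈ s, A i).trace = 0) {i : ι} (hi : i ∈ s) : A i = 0 := by
  rw [trace_sum, Finset.sum_eq_zero_iff_of_nonneg fun j hj => (hA j hj).trace_nonneg] at h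
  exact (hA i hi).trace_eq_zero_iff.1 (h i hi)

theorem Bmat_smul {N : ℕ} (A1 A2 A3 : Matrix (Fin N) (Fin N) ℂ) (c t : ℝ)
    (R : Matrix (Fin N) (Fin N) ℂ) :
    Bmat A1 A2 A3 (c * t) ((c : ℂ) • R) = (c : ℂ) • Bmat A1 A2 A3 t R := by
  ext i j
  fin_cases i <;> fin_cases j <;> simp [Bmat, mul_sub]

namespace Feasible

variable {N K : ℕ} {A1 A2 A3 : Matrix (Fin N) (Fin N) ℂ} {h : Fin K → Fin N → ℂ}
  {γ σsq : Fin K → ℝ} {P t : ℝ} {W : Fin K → Matrix (Fin N) (Fin N) ℂ}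
  {WS : Matrix (Fin N) (Fin N) ℂ}

theorem trace_pos (hfeas : Feasible A1 A2 A3 h γ σsq P t W WS) (k : Fin K)
    (hk : 0 < γ k * σsq k) : 0 < ((∑ i, W i) + WS).trace := by
  obtain ⟨hW, hWS, -, hSINR, -⟩ := hfeas
  have hsum : (∑ i, W i).PosSemidef := posSemidef_sum _ fun i _ => hW i
  refine (hsum.add hWS).trace_nonneg.lt_of_ne fun h0 => ?_
  rw [trace_add, eq_comm, add_eq_zero_iff_of_nonneg hsum.trace_nonneg hWS.trace_nonneg] at h0
  have hW0 : ∀ i, W i = 0 := fun i =>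
    PosSemidef.eq_zero_of_trace_sum_eq_zero (fun i _ => hW i) h0.1 (Finset.mem_univ i)
  have := hSINR k
  simp only [hW0, Finset.sum_const_zero, smul_zero, sub_zero, zero_mulVec,
    dotProduct_zero] at this
  exact hk.not_ge (by exact_mod_cast this)

theorem smul (hfeas : Feasible A1 A2 A3 h γ σsq P t W WS) {c : ℝ} (hc : 1 ≤ c)
    (hγσ : ∀ k, 0 ≤ γ k * σsq k) {P' : ℝ} (hP' : (c : ℂ) * ((∑ k, W k) + WS).trace ≤ P') :
    Feasible A1 A2 A3 h γ σsq P' (c * t) (fun k => (c : ℂ) • W k) ((c : ℂ) • WS) := by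
  obtain ⟨hW, hWS, hB, hSINR, -⟩ := hfeas
  have hc0 : (0 : ℂ) ≤ c := Complex.zero_le_real.2 (zero_le_one.trans hc)
  have hR : (∑ k, (c : ℂ) • W k) + (c : ℂ) • WS = (c : ℂ) • ((∑ k, W k) + WS) := by
    rw [smul_add, Finset.smul_sum]
  refine ⟨fun k => (hW k).smul hc0, hWS.smul hc0, ?_, fun k => ?_, ?_⟩
  · rw [hR, Bmat_smul]
    exact hB.smul hc0
  · rw [← Finset.smul_sum, smul_comm _ (c : ℂ), ← smul_sub, smul_mulVec, dotProduct_smul,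
      smul_eq_mul]
    have hq := hSINR k
    have hq0 := (Complex.zero_le_real.2 (hγσ k)).trans hq
    calc ((γ k * σsq k : ℝ) : ℂ) ≤ _ := hq
      _ ≤ _ := le_mul_of_one_le_left hq0 (by exact_mod_cast hc)
  · rwa [hR, trace_smul, smul_eq_mul]

end Feasible

theorem stmt2_general {N K : ℕ} (hK : 1 ≤ K) (A1 A2 A3 : Matrix (Fin N) (Fin N) ℂ)
    (h : Fin K → Fin N → ℂ) (γ σsq : Fin K → ℝ)
    (hγ : ∀ k, 0 < γ k) (hσ : ∀ k, 0 < σsq k) (P : ℝ)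
    (t : ℝ) (ht : 0 < t)
    (W : Fin K → Matrix (Fin N) (Fin N) ℂ) (WS : Matrix (Fin N) (Fin N) ℂ)
    (hopt : Optimal A1 A2 A3 h γ σsq P t W WS) :
    ((∑ k, W k) + WS).trace = (P : ℂ) := by
  obtain ⟨hfeas, hmax⟩ := hopt
  have hγσ k : 0 < γ k * σsq k := mul_pos (hγ k) (hσ k)
  have htr := hfeas.trace_pos ⟨0, hK⟩ (hγσ _)
  obtain ⟨r, hr, hRr⟩ : ∃ r : ℝ, 0 < r ∧ ((∑ k, W k) + WS).trace = r :=
    ⟨_, (Complex.pos_iff.1 htr).1, Complex.eq_re_of_ofReal_le (Complex.ofReal_zero ▸ htr.le)⟩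
  have hrP : r ≤ P := Complex.real_le_real.1 (hRr ▸ hfeas.2.2.2.2)
  rw [hRr, Complex.ofReal_inj]
  refine hrP.antisymm (not_lt.1 fun hlt => ?_)
  have hc : 1 < P / r := (one_lt_div hr).2 hlt
  have hscaled := hmax _ _ _ <| hfeas.smul hc.le (fun k => (hγσ k).le) (P' := P) <| by
    rw [hRr, ← Complex.ofReal_mul, div_mul_cancel₀ _ hr.ne']
  nlinarith

/-- For `K ≥ 1`, at any optimal solution of (P2-R) with optimal value `t* > 0`,
the power constraint is tight: `tr(∑_k W*_k + W*_S) = P`. -/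
theorem stmt2 {N K : ℕ} (hK : 1 ≤ K) (A1 A2 A3 : Matrix (Fin N) (Fin N) ℂ)
    (hA1 : A1.IsHermitian) (hA3 : A3.IsHermitian)
    (h : Fin K → Fin N → ℂ) (γ σsq : Fin K → ℝ)
    (hγ : ∀ k, 0 < γ k) (hσ : ∀ k, 0 < σsq k) (P : ℝ) (hP : 0 < P)
    (t : ℝ) (ht : 0 < t)
    (W : Fin K → Matrix (Fin N) (Fin N) ℂ) (WS : Matrix (Fin N) (Fin N) ℂ)
    (hopt : Optimal A1 A2 A3 h γ σsq P t W WS) :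
    ((∑ k, W k) + WS).trace = (P : ℂ) :=
  stmt2_general hK A1 A2 A3 h γ σsq hγ hσ P t ht W WS hopt
end

section
/- Fix k ∈ {1, …, K}. Let W_1, …, W_K and W̄_1, …, W̄_K be Hermitian matrices in ℂ^{N×N}, let h ∈ ℂ^N, γ > 0, σ² > 0. Suppose: (a) Σ_{i=1}^K (W_i − W̄_i) is positive semidefinite; (b) hᴴ W̄_k h = hᴴ W_k h; (c) hᴴ (W_k − γ Σ_{i≠k} W_i) h ≥ γ σ². Then hᴴ (W̄_k − γ Σ_{i≠k} W̄_i) h ≥ γ σ². -/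
open Matrix ComplexOrder

namespace Matrix

variable {n ι R : Type*} [Fintype n] [Fintype ι] [DecidableEq ι] [Ring R] [StarRing R]

def quadFormHom (x : n → R) : Matrix n n R →+ R where
  toFun M := star x ⬝ᵥ (M *ᵥ x)
  map_zero' := by simp
  map_add' M M' := by simp only [add_mulVec, dotProduct_add]

theorem quadFormHom_apply (x : n → R) (M : Matrix n n R) :
    quadFormHom x M = star x ⬝ᵥ (M *ᵥ x) := rfl

/-- The `k`-th terms of `∑ i, (W i - W̄ i)` cancel in the form, leaving the sums over `i ≠ k`. -/
theorem quadFormHom_sum_erase_le_of_posSemidef [PartialOrder R] [IsOrderedAddMonoid R]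
    {W Wbar : ι → Matrix n n R} (k : ι) {x : n → R}
    (hpsd : (∑ i, (W i - Wbar i)).PosSemidef)
    (hk : quadFormHom x (Wbar k) = quadFormHom x (W k)) :
    quadFormHom x (∑ i ∈ Finset.univ.erase k, Wbar i) ≤
      quadFormHom x (∑ i ∈ Finset.univ.erase k, W i) := by
  have hsplit : quadFormHom x (∑ i, (W i - Wbar i)) =
      quadFormHom x (∑ i ∈ Finset.univ.erase k, W i) -
        quadFormHom x (∑ i ∈ Finset.univ.erase k, Wbar i) := by
    rw [← Finset.add_sum_erase _ _ (Finset.mem_univ k), Finset.sum_sub_distrib]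
    simp only [map_add, map_sub, hk, sub_self, zero_add]
  have hnonneg := hpsd.dotProduct_mulVec_nonneg x
  rw [← quadFormHom_apply, hsplit] at hnonneg
  exact sub_nonneg.mp hnonneg

end Matrix

theorem stmt4_general {N K : ℕ} (k : Fin K)
    (W Wbar : Fin K → Matrix (Fin N) (Fin N) ℂ)
    (h : Fin N → ℂ) (γ σsq : ℝ) (hγ : 0 < γ)
    (ha : (∑ i, (W i - Wbar i)).PosSemidef)
    (hb : star h ⬝ᵥ (Wbar k *ᵥ h) = star h ⬝ᵥ (W k *ᵥ h))
    (hc : ((γ * σsq : ℝ) : ℂ) ≤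
      star h ⬝ᵥ ((W k - (γ : ℂ) • ∑ i ∈ Finset.univ.erase k, W i) *ᵥ h)) :
    ((γ * σsq : ℝ) : ℂ) ≤
      star h ⬝ᵥ ((Wbar k - (γ : ℂ) • ∑ i ∈ Finset.univ.erase k, Wbar i) *ᵥ h) := by
  have hform (M S : Matrix (Fin N) (Fin N) ℂ) :
      star h ⬝ᵥ ((M - (γ : ℂ) • S) *ᵥ h) = quadFormHom h M - γ * quadFormHom h S := by
    simp only [quadFormHom_apply, sub_mulVec, dotProduct_sub, smul_mulVec, dotProduct_smul,
      smul_eq_mul]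
  have hle := quadFormHom_sum_erase_le_of_posSemidef k ha hb
  rw [hform] at hc ⊢
  rw [show quadFormHom h (Wbar k) = quadFormHom h (W k) from hb]
  calc ((γ * σsq : ℝ) : ℂ) ≤ _ := hc
    _ ≤ _ := sub_le_sub_left (mul_le_mul_of_nonneg_left hle (by exact_mod_cast hγ.le)) _

/-- Preservation of the SINR constraint: if `∑_i (W_i − W̄_i)` is PSD, the quadratic
forms of `W_k` and `W̄_k` at `h` coincide, and `hᴴ(W_k − γ ∑_{i≠k} W_i)h ≥ γσ²`, then
`hᴴ(W̄_k − γ ∑_{i≠k} W̄_i)h ≥ γσ²`. -/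
theorem stmt4 {N K : ℕ} (k : Fin K)
    (W Wbar : Fin K → Matrix (Fin N) (Fin N) ℂ)
    (hW : ∀ i, (W i).IsHermitian) (hWbar : ∀ i, (Wbar i).IsHermitian)
    (h : Fin N → ℂ) (γ σsq : ℝ) (hγ : 0 < γ) (hσ : 0 < σsq)
    (ha : (∑ i, (W i - Wbar i)).PosSemidef)
    (hb : star h ⬝ᵥ (Wbar k *ᵥ h) = star h ⬝ᵥ (W k *ᵥ h))
    (hc : ((γ * σsq : ℝ) : ℂ) ≤
      star h ⬝ᵥ ((W k - (γ : ℂ) • ∑ i ∈ Finset.univ.erase k, W i) *ᵥ h)) :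
    ((γ * σsq : ℝ) : ℂ) ≤
      star h ⬝ᵥ ((Wbar k - (γ : ℂ) • ∑ i ∈ Finset.univ.erase k, Wbar i) *ᵥ h) :=
  stmt4_general k W Wbar h γ σsq hγ ha hb hc
end

section
/- (Feasibility preservation in the rank-reduction step of Proposition 2.) Fix vectors f_1, …, f_K, h_1, …, h_K ∈ ℂ^N, a matrix J ∈ ℂ^{N×m}, reals γ_k > 0 and σ_k² > 0, real numbers Δ_1, …, Δ_K, a Hermitian matrix Δ_S ∈ ℂ^{m×m}, and a nonzero real ξ. Set W̄_k = f_k f_kᴴ and W̄_S = J Jᴴ. Assume: (a) |f_kᴴ h_k|² − γ_k Σ_{i≠k} |f_iᴴ h_k|² ≥ γ_k σ_k² for every k; (b) |f_kᴴ h_k|² Δ_k − γ_k Σ_{i≠k} |f_iᴴ h_k|² Δ_i = 0 for every k; (c) Σ_{k=1}^K (f_kᴴ f_k) Δ_k + tr(Jᴴ J Δ_S) = 0; (d) |Δ_k| ≤ |ξ| for every k and |vᴴ Δ_S v| ≤ |ξ|·(vᴴ v) for every v ∈ ℂ^m. Define Ŵ_k = (1 − Δ_k/ξ) W̄_k and Ŵ_S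 = J (I_m − Δ_S/ξ) Jᴴ. Then: (1) every Ŵ_k and Ŵ_S is positive semidefinite; (2) h_kᴴ(Ŵ_k − γ_k Σ_{i≠k} Ŵ_i) h_k ≥ γ_k σ_k² for every k; and (3) tr(Σ_{k=1}^K Ŵ_k + Ŵ_S) = tr(Σ_{k=1}^K W̄_k + W̄_S). -/
open Matrix ComplexOrder

/-!
Write `Ŵ = W̄ - ξ⁻¹ • D`, where `D` is the `Δ`-weighted family `(Δ_k W̄_k, J Δ_S Jᴴ)`.
The SINR margins and the total power are linear in the family, and (b), (c) say exactly
that they vanish on `D`; so they agree on `Ŵ` and `W̄`. Hypothesis (d) bounds the numerical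
range of `Δ`, which keeps the scalars `1 - Δ_k / ξ` nonnegative and `I - ξ⁻¹ Δ_S` positive
semidefinite, and congruence by `J` preserves positive semidefiniteness.
-/

lemma star_dotProduct_vecMulVec_self_star_mulVec {n : Type*} [Fintype n] (a x : n → ℂ) :
    star x ⬝ᵥ (vecMulVec a (star a) *ᵥ x) = Complex.normSq (star a ⬝ᵥ x) := by
  rw [vecMulVec_mulVec, op_smul_eq_smul, dotProduct_smul, smul_eq_mul,
    Complex.normSq_eq_conj_mul_self, ← Complex.star_def, star_dotProduct, star_star, mul_comm]

lemma posSemidef_one_sub_smul {𝕜 n : Type*} [RCLike 𝕜] [Fintype n] [DecidableEq n]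
    {A : Matrix n n 𝕜} (hA : A.IsHermitian) {r t : ℝ}
    (hAr : ∀ v : n → 𝕜, ‖star v ⬝ᵥ (A *ᵥ v)‖ ≤ r * RCLike.re (star v ⬝ᵥ v))
    (htr : |t| * r ≤ 1) : (1 - (t : 𝕜) • A).PosSemidef := by
  have hM : (1 - (t : 𝕜) • A).IsHermitian :=
    isHermitian_one.sub (hA.smul (RCLike.conj_ofReal t))
  refine .of_dotProduct_mulVec_nonneg hM fun v => RCLike.nonneg_iff.mpr
    ⟨?_, hM.im_star_dotProduct_mulVec_self v⟩
  have hv : 0 ≤ RCLike.re (star v ⬝ᵥ v) := by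
    simpa using (PosSemidef.one (R := 𝕜) (n := n)).re_dotProduct_nonneg v
  have hq : t * RCLike.re (star v ⬝ᵥ (A *ᵥ v)) ≤ |t| * r * RCLike.re (star v ⬝ᵥ v) :=
    calc
      _ ≤ |t| * ‖star v ⬝ᵥ (A *ᵥ v)‖ :=
        (le_abs_self _).trans ((abs_mul _ _).trans_le
          (mul_le_mul_of_nonneg_left (RCLike.abs_re_le_norm _) (abs_nonneg t)))
      _ ≤ |t| * (r * RCLike.re (star v ⬝ᵥ v)) :=
        mul_le_mul_of_nonneg_left (hAr v) (abs_nonneg t)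
      _ = _ := by ring
  simp only [sub_mulVec, one_mulVec, smul_mulVec, dotProduct_sub, dotProduct_smul, map_sub,
    smul_eq_mul, RCLike.re_ofReal_mul]
  nlinarith

lemma one_sub_div_nonneg_of_abs_le_abs {a b : ℝ} (h : |a| ≤ |b|) : 0 ≤ 1 - a / b :=
  sub_nonneg.mpr <| (le_abs_self _).trans <| by
    rw [abs_div]; exact div_le_one_of_le₀ h (abs_nonneg b)

lemma star_dotProduct_smul_vecMulVec_sub_smul_sum_mulVec {ι n : Type*} [Fintype n]
    (f : ι → n → ℂ) (c : ι → ℝ) (γ : ℝ) (k : ι) (s : Finset ι) (x : n → ℂ) :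
    star x ⬝ᵥ (((c k : ℂ) • vecMulVec (f k) (star (f k))
        - (γ : ℂ) • ∑ i ∈ s, (c i : ℂ) • vecMulVec (f i) (star (f i))) *ᵥ x)
      = ((c k * Complex.normSq (star (f k) ⬝ᵥ x)
        - γ * ∑ i ∈ s, c i * Complex.normSq (star (f i) ⬝ᵥ x) : ℝ) : ℂ) := by
  simp only [sub_mulVec, smul_mulVec, sum_mulVec, dotProduct_sub, dotProduct_smul,
    dotProduct_sum, star_dotProduct_vecMulVec_self_star_mulVec, smul_eq_mul]
  push_cast
  rfl

lemma le_mul_sub_mul_sum_one_sub_div {ι : Type*} {s : Finset ι} {a Δ : ι → ℝ} {k : ι}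
    {γ b : ℝ} (ξ : ℝ) (ha : b ≤ a k - γ * ∑ i ∈ s, a i)
    (hb : a k * Δ k - γ * ∑ i ∈ s, a i * Δ i = 0) :
    b ≤ (1 - Δ k / ξ) * a k - γ * ∑ i ∈ s, (1 - Δ i / ξ) * a i := by
  have hsum :
      ∑ i ∈ s, (1 - Δ i / ξ) * a i = ∑ i ∈ s, a i - (∑ i ∈ s, a i * Δ i) / ξ := by
    rw [Finset.sum_div, ← Finset.sum_sub_distrib]
    exact Finset.sum_congr rfl fun i _ => by ring
  calc b ≤ a k - γ * ∑ i ∈ s, a i - (a k * Δ k - γ * ∑ i ∈ s, a i * Δ i) / ξ := by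
        rw [hb, zero_div, sub_zero]; exact ha
    _ = _ := by rw [hsum]; ring

lemma trace_mul_one_sub_smul_mul_conjTranspose {R n m : Type*} [CommRing R] [StarRing R]
    [Fintype n] [Fintype m] [DecidableEq m] (J : Matrix n m R) (t : R) (D : Matrix m m R) :
    (J * (1 - t • D) * Jᴴ).trace = (J * Jᴴ).trace - t * (Jᴴ * J * D).trace := by
  rw [trace_mul_comm, ← Matrix.mul_assoc, Matrix.mul_sub, Matrix.mul_one, Matrix.mul_smul,
    trace_sub, trace_smul, smul_eq_mul, trace_mul_comm J, Matrix.mul_assoc]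

theorem stmt13_general {N K m : ℕ}
    (f h : Fin K → Fin N → ℂ) (J : Matrix (Fin N) (Fin m) ℂ)
    (γ σsq : Fin K → ℝ)
    (Δ : Fin K → ℝ) (ΔS : Matrix (Fin m) (Fin m) ℂ) (hΔS : ΔS.IsHermitian)
    (ξ : ℝ)
    (Wbar : Fin K → Matrix (Fin N) (Fin N) ℂ)
    (hWbar : ∀ k, Wbar k = vecMulVec (f k) (star (f k)))
    (WbarS : Matrix (Fin N) (Fin N) ℂ) (hWbarS : WbarS = J * Jᴴ)
    (ha : ∀ k, γ k * σsq k ≤ Complex.normSq (star (f k) ⬝ᵥ h k)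
        - γ k * ∑ i ∈ Finset.univ.erase k, Complex.normSq (star (f i) ⬝ᵥ h k))
    (hb : ∀ k, Complex.normSq (star (f k) ⬝ᵥ h k) * Δ k
        - γ k * ∑ i ∈ Finset.univ.erase k, Complex.normSq (star (f i) ⬝ᵥ h k) * Δ i = 0)
    (hc : ∑ k, (star (f k) ⬝ᵥ f k) * ((Δ k : ℝ) : ℂ) + (Jᴴ * J * ΔS).trace = 0)
    (hd1 : ∀ k, |Δ k| ≤ |ξ|)
    (hd2 : ∀ v : Fin m → ℂ,
      ‖star v ⬝ᵥ (ΔS *ᵥ v)‖ ≤ |ξ| * (star v ⬝ᵥ v).re)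
    (What : Fin K → Matrix (Fin N) (Fin N) ℂ)
    (hWhat : ∀ k, What k = ((1 - Δ k / ξ : ℝ) : ℂ) • Wbar k)
    (WhatS : Matrix (Fin N) (Fin N) ℂ)
    (hWhatS : WhatS = J * ((1 : Matrix (Fin m) (Fin m) ℂ) - (ξ : ℂ)⁻¹ • ΔS) * Jᴴ) :
    ((∀ k, (What k).PosSemidef) ∧ WhatS.PosSemidef) ∧
    (∀ k, ((γ k * σsq k : ℝ) : ℂ) ≤
        star (h k) ⬝ᵥ ((What k - ((γ k : ℝ) : ℂ) •
          ∑ i ∈ Finset.univ.erase k, What i) *ᵥ h k)) ∧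
    ((∑ k, What k) + WhatS).trace = ((∑ k, Wbar k) + WbarS).trace := by
  obtain rfl : Wbar = fun k => vecMulVec (f k) (star (f k)) := funext hWbar
  obtain rfl : What = fun k => ((1 - Δ k / ξ : ℝ) : ℂ) • vecMulVec (f k) (star (f k)) :=
    funext hWhat
  subst hWbarS hWhatS
  refine ⟨⟨fun k => (posSemidef_vecMulVec_self_star _).smul
    (Complex.zero_le_real.mpr (one_sub_div_nonneg_of_abs_le_abs (hd1 k))), ?_⟩, fun k => ?_, ?_⟩
  · have hξ_inv : |ξ⁻¹| * |ξ| ≤ 1 := by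
      rw [abs_inv]; exact inv_mul_le_one_of_le₀ le_rfl (abs_nonneg ξ)
    have hI := posSemidef_one_sub_smul hΔS hd2 hξ_inv
    push_cast at hI
    exact hI.mul_mul_conjTranspose_same J
  · beta_reduce
    rw [star_dotProduct_smul_vecMulVec_sub_smul_sum_mulVec (c := fun i => 1 - Δ i / ξ)]
    exact_mod_cast le_mul_sub_mul_sum_one_sub_div
      (a := fun i => Complex.normSq (star (f i) ⬝ᵥ h k)) ξ (ha k) (hb k)
  · simp only [trace_add, trace_sum, trace_smul, trace_vecMulVec,
      trace_mul_one_sub_smul_mul_conjTranspose]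
    have hsum : ∑ k, ((1 - Δ k / ξ : ℝ) : ℂ) • (f k ⬝ᵥ star (f k))
        = ∑ k, f k ⬝ᵥ star (f k)
          - (ξ : ℂ)⁻¹ * ∑ k, (star (f k) ⬝ᵥ f k) * (Δ k : ℂ) := by
      rw [Finset.mul_sum, ← Finset.sum_sub_distrib]
      refine Finset.sum_congr rfl fun k _ => ?_
      rw [dotProduct_comm (star _)]
      push_cast
      ring
    rw [hsum]
    linear_combination (-(ξ : ℂ)⁻¹) * hc

/-- Feasibility preservation in the rank-reduction step of Proposition 2: with
`W̄_k = f_k f_kᴴ`, `W̄_S = J Jᴴ`, `Ŵ_k = (1 − Δ_k/ξ) W̄_k`, `Ŵ_S = J(I − Δ_S/ξ)Jᴴ`,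
under hypotheses (a)–(d), all `Ŵ_k`, `Ŵ_S` are PSD, the SINR constraints hold for the
hatted matrices and the total transmit power is unchanged. -/
theorem stmt13 {N K m : ℕ}
    (f h : Fin K → Fin N → ℂ) (J : Matrix (Fin N) (Fin m) ℂ)
    (γ σsq : Fin K → ℝ) (hγ : ∀ k, 0 < γ k) (hσ : ∀ k, 0 < σsq k)
    (Δ : Fin K → ℝ) (ΔS : Matrix (Fin m) (Fin m) ℂ) (hΔS : ΔS.IsHermitian)
    (ξ : ℝ) (hξ : ξ ≠ 0)
    (Wbar : Fin K → Matrix (Fin N) (Fin N) ℂ)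
    (hWbar : ∀ k, Wbar k = vecMulVec (f k) (star (f k)))
    (WbarS : Matrix (Fin N) (Fin N) ℂ) (hWbarS : WbarS = J * Jᴴ)
    (ha : ∀ k, γ k * σsq k ≤ Complex.normSq (star (f k) ⬝ᵥ h k)
        - γ k * ∑ i ∈ Finset.univ.erase k, Complex.normSq (star (f i) ⬝ᵥ h k))
    (hb : ∀ k, Complex.normSq (star (f k) ⬝ᵥ h k) * Δ k
        - γ k * ∑ i ∈ Finset.univ.erase k, Complex.normSq (star (f i) ⬝ᵥ h k) * Δ i = 0)
    (hc : ∑ k, (star (f k) ⬝ᵥ f k) * ((Δ k : ℝ) : ℂ) + (Jᴴ * J * ΔS).trace = 0)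
    (hd1 : ∀ k, |Δ k| ≤ |ξ|)
    (hd2 : ∀ v : Fin m → ℂ,
      ‖star v ⬝ᵥ (ΔS *ᵥ v)‖ ≤ |ξ| * (star v ⬝ᵥ v).re)
    (What : Fin K → Matrix (Fin N) (Fin N) ℂ)
    (hWhat : ∀ k, What k = ((1 - Δ k / ξ : ℝ) : ℂ) • Wbar k)
    (WhatS : Matrix (Fin N) (Fin N) ℂ)
    (hWhatS : WhatS = J * ((1 : Matrix (Fin m) (Fin m) ℂ) - (ξ : ℂ)⁻¹ • ΔS) * Jᴴ) :
    ((∀ k, (What k).PosSemidef) ∧ WhatS.PosSemidef) ∧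
    (∀ k, ((γ k * σsq k : ℝ) : ℂ) ≤
        star (h k) ⬝ᵥ ((What k - ((γ k : ℝ) : ℂ) •
          ∑ i ∈ Finset.univ.erase k, What i) *ᵥ h k)) ∧
    ((∑ k, What k) + WhatS).trace = ((∑ k, Wbar k) + WbarS).trace :=
  stmt13_general f h J γ σsq Δ ΔS hΔS ξ Wbar hWbar WbarS hWbarS ha hb hc hd1 hd2 What hWhat WhatS
    hWhatS
end
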